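/- arXiv:2212.09861 — 4 statements merged into one kernel-verified Lean document; each statement's English description precedes it below -/
import Mathlib

section
/- For the cycle C_n on n ≥ 3 vertices, the 2-Z-Grundy domination number satisfies γ_gr^{Z,2}(C_n) = n − 1. -/
/-!
Every vertex of `C_n` has degree 2, so a 2-Z-sequence cannot contain every vertex: the last
vertex `v` would footprint a neighbour `u`, and the two vertices of `N[u] ∖ {v}` already precede
it. Conversely `0, 1, …, n - 2`, footprinting `i + 1` at step `i`, is a 2-Z-sequence.
-/

/-- A sequence `S` of distinct vertices is a generalized `k`-Grundy sequence with respect to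
neighborhood assignments `N₁` (where the footprinted vertex must lie relative to the new
vertex) and `N₂` (the neighborhoods of earlier vertices that must contain the footprinted
vertex fewer than `k` times): for each position `i` there is a vertex `u ∈ N₁ (S i)` that
belongs to `N₂ w` for fewer than `k` of the vertices `w` preceding position `i`. -/
def IsGrundySeq {V : Type*} (k : ℕ) (N₁ N₂ : V → Set V) (S : List V) : Prop :=
  S.Nodup ∧ ∀ (i : ℕ) (hi : i < S.length),
    ∃ u ∈ N₁ (S.get ⟨i, hi⟩), {w | w ∈ S.take i ∧ u ∈ N₂ w}.ncard < k

/-- The length of a longest generalized `k`-Grundy sequence. -/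
noncomputable def grundyVal {V : Type*} (k : ℕ) (N₁ N₂ : V → Set V) : ℕ :=
  sSup {m | ∃ S : List V, IsGrundySeq k N₁ N₂ S ∧ S.length = m}

/-- The closed neighborhood `N[v]` of a vertex. -/
def closedNbhd {V : Type*} (G : SimpleGraph V) (v : V) : Set V :=
  insert v (G.neighborSet v)

/-- The `k`-Grundy domination number `γ_gr^k(G)`. -/
noncomputable def kGrundy {V : Type*} (G : SimpleGraph V) (k : ℕ) : ℕ :=
  grundyVal k (closedNbhd G) (closedNbhd G)

/-- The `k`-`L`-Grundy domination number `γ_gr^{L,k}(G)`. -/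
noncomputable def kLGrundy {V : Type*} (G : SimpleGraph V) (k : ℕ) : ℕ :=
  grundyVal k (closedNbhd G) G.neighborSet

/-- The `k`-`Z`-Grundy domination number `γ_gr^{Z,k}(G)`. -/
noncomputable def kZGrundy {V : Type*} (G : SimpleGraph V) (k : ℕ) : ℕ :=
  grundyVal k G.neighborSet (closedNbhd G)

/-- The `k`-`t`-Grundy domination number `γ_gr^{t,k}(G)`. -/
noncomputable def ktGrundy {V : Type*} (G : SimpleGraph V) (k : ℕ) : ℕ :=
  grundyVal k G.neighborSet G.neighborSet

open SimpleGraph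

section GrundySeq

variable {V : Type*} {k : ℕ} {N₁ N₂ : V → Set V}

lemma grundyVal_eq_of_isGrundySeq {S : List V} {b : ℕ} (hS : IsGrundySeq k N₁ N₂ S)
    (hlen : S.length = b) (hle : ∀ T, IsGrundySeq k N₁ N₂ T → T.length ≤ b) :
    grundyVal k N₁ N₂ = b :=
  IsGreatest.csSup_eq ⟨⟨S, hS, hlen⟩, by rintro _ ⟨T, hT, rfl⟩; exact hle T hT⟩

lemma IsGrundySeq.exists_getLast {S : List V} (hS : IsGrundySeq k N₁ N₂ S) (hne : S ≠ []) :
    ∃ u ∈ N₁ (S.getLast hne), {w | w ∈ S.dropLast ∧ u ∈ N₂ w}.ncard < k := by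
  have hlt : S.length - 1 < S.length := Nat.sub_lt (List.length_pos_iff.mpr hne) one_pos
  simpa [List.getLast_eq_getElem, List.dropLast_eq_take] using hS.2 _ hlt

end GrundySeq

section ClosedNbhd

variable {V : Type*} (G : SimpleGraph V)

lemma mem_closedNbhd_comm {u w : V} : u ∈ closedNbhd G w ↔ w ∈ closedNbhd G u := by
  simp [closedNbhd, eq_comm, G.adj_comm]

lemma ncard_closedNbhd [Fintype V] [DecidableRel G.Adj] (v : V) :
    (closedNbhd G v).ncard = G.degree v + 1 := by
  rw [closedNbhd, Set.ncard_insert_of_notMem G.notMem_neighborSet_self,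
    Set.ncard_eq_toFinset_card', Set.toFinset_card, card_neighborSet_eq_degree]

end ClosedNbhd

theorem IsGrundySeq.length_lt_card_of_le_degree {V : Type*} [Fintype V] [Nonempty V]
    {G : SimpleGraph V} [DecidableRel G.Adj] {k : ℕ} (hdeg : ∀ v, k ≤ G.degree v) {S : List V}
    (hS : IsGrundySeq k G.neighborSet (closedNbhd G) S) : S.length < Fintype.card V := by
  classical
  by_contra! hcard
  have hall : ∀ w, w ∈ S := by
    have : S.toFinset = Finset.univ :=
      Finset.eq_univ_of_card _
        (le_antisymm (Finset.card_le_univ _) (by rwa [List.toFinset_card_of_nodup hS.1]))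
    simpa [Finset.ext_iff] using this
  have hne : S ≠ [] := List.ne_nil_of_mem (hall (Classical.arbitrary V))
  obtain ⟨u, hu, hcount⟩ := hS.exists_getLast hne
  have hsub : closedNbhd G u \ {S.getLast hne} ⊆ {w | w ∈ S.dropLast ∧ u ∈ closedNbhd G w} :=
    fun w ⟨hw, hwv⟩ => ⟨List.mem_dropLast_of_mem_of_ne_getLast (hall w) hwv,
      (mem_closedNbhd_comm G).mpr hw⟩
  have hv : S.getLast hne ∈ closedNbhd G u := Set.mem_insert_of_mem _ (G.adj_symm hu)
  have hdeg_le := Set.ncard_le_ncard hsub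
  rw [Set.ncard_sdiff_singleton_of_mem hv, ncard_closedNbhd] at hdeg_le
  have hk := hdeg u
  omega

section CycleGraph

variable {m : ℕ}

lemma closedNbhd_cycleGraph (v : Fin (m + 2)) :
    closedNbhd (cycleGraph (m + 2)) v = {v, v - 1, v + 1} := by
  rw [closedNbhd, cycleGraph_neighborSet]

/-- When vertex `i` is added, footprint `i + 1`: of its closed neighbourhood `{i, i + 1, i + 2}`
only `i + 2` can occur among `0, …, i - 1` (namely as `0` at the last step). -/
lemma isGrundySeq_cycleGraph_ofFn_castSucc :
    IsGrundySeq 2 (cycleGraph (m + 3)).neighborSet (closedNbhd (cycleGraph (m + 3)))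
      (List.ofFn (Fin.castSucc : Fin (m + 2) → Fin (m + 3))) := by
  refine ⟨List.nodup_ofFn.mpr (Fin.castSucc_injective _), fun i hi => ?_⟩
  rw [List.length_ofFn] at hi
  set v : Fin (m + 3) := Fin.castSucc ⟨i, hi⟩
  have hv1 : (v + 1).val = i + 1 := Fin.val_add_one_of_lt (by simp [v, Fin.lt_def]; omega)
  refine ⟨v + 1, ?_, ?_⟩
  · rw [List.get_eq_getElem, List.getElem_ofFn, cycleGraph_neighborSet]
    exact Set.mem_insert_of_mem _ rfl
  have hsub : {w | w ∈ (List.ofFn (Fin.castSucc : Fin (m + 2) → Fin (m + 3))).take i ∧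
      v + 1 ∈ closedNbhd (cycleGraph (m + 3)) w} ⊆ {v + 1 + 1} := by
    rintro w ⟨hw, hwu⟩
    have hlt : w.val < i := by
      obtain ⟨j, hj, rfl⟩ := List.mem_take_iff_getElem.mp hw
      rw [List.length_ofFn] at hj
      simp only [List.getElem_ofFn, Fin.val_castSucc]
      omega
    rw [mem_closedNbhd_comm, closedNbhd_cycleGraph, Set.mem_insert_iff, Set.mem_insert_iff,
      Set.mem_singleton_iff] at hwu
    rcases hwu with h | h | h
    · rw [h, hv1] at hlt; omega
    · rw [h, add_sub_cancel_right] at hlt; simp [v] at hlt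
    · exact h
  calc _ ≤ ({v + 1 + 1} : Set (Fin (m + 3))).ncard := Set.ncard_le_ncard hsub
    _ < 2 := by simp

end CycleGraph

/-- For `n ≥ 3`, `γ_gr^{Z,2}(C_n) = n - 1`. -/
theorem kZGrundy_cycleGraph (n : ℕ) (hn : 3 ≤ n) :
    kZGrundy (SimpleGraph.cycleGraph n) 2 = n - 1 := by
  obtain ⟨m, rfl⟩ : ∃ m, n = m + 3 := ⟨n - 3, by omega⟩
  refine grundyVal_eq_of_isGrundySeq isGrundySeq_cycleGraph_ofFn_castSucc (by simp) fun S hS => ?_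
  have hlt := hS.length_lt_card_of_le_degree fun _ => cycleGraph_degree_three_le.ge
  rw [Fintype.card_fin] at hlt
  omega
end

section
/- For the complete graph K_n and any integer k with 1 ≤ k ≤ n − 1, the k-L-Grundy domination number satisfies γ_gr^{L,k}(K_n) = k + 1. -/
theorem grundyVal_eq_of_forall_length_le {V : Type*} {k m : ℕ} {N₁ N₂ : V → Set V}
    (hle : ∀ S, IsGrundySeq k N₁ N₂ S → S.length ≤ m)
    (hex : ∃ S, IsGrundySeq k N₁ N₂ S ∧ S.length = m) :
    grundyVal k N₁ N₂ = m :=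
  IsGreatest.csSup_eq ⟨hex, by rintro _ ⟨S, hS, rfl⟩; exact hle S hS⟩

section CompleteGraph

variable {V : Type*}

theorem closedNbhd_top (v : V) : closedNbhd (⊤ : SimpleGraph V) v = Set.univ := by
  rw [closedNbhd, SimpleGraph.neighborSet_top, Set.insert_eq, Set.union_compl_self]

open Classical in
theorem ncard_mem_and_mem_neighborSet_top (l : List V) (u : V) :
    {w | w ∈ l ∧ u ∈ (⊤ : SimpleGraph V).neighborSet w}.ncard = (l.toFinset.erase u).card := by
  rw [← Set.ncard_coe_finset]
  congr 1
  ext w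
  simp [ne_comm, and_comm]

theorem IsGrundySeq.length_le_of_top {k : ℕ} {S : List V}
    (hS : IsGrundySeq k (closedNbhd ⊤) (⊤ : SimpleGraph V).neighborSet S) :
    S.length ≤ k + 1 := by
  classical
  by_contra! hlong
  obtain ⟨hnd, hfoot⟩ := hS
  obtain ⟨u, -, hcount⟩ := hfoot (k + 1) hlong
  have hprefix : (S.take (k + 1)).toFinset.card = k + 1 := by
    rw [List.toFinset_card_of_nodup (hnd.sublist (List.take_sublist _ _)), List.length_take]
    omega
  rw [ncard_mem_and_mem_neighborSet_top] at hcount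
  have := Finset.pred_card_le_card_erase (s := (S.take (k + 1)).toFinset) (a := u)
  omega

theorem isGrundySeq_top_of_length_le {k : ℕ} (hk : 1 ≤ k) {S : List V} (hnd : S.Nodup)
    (hlen : S.length ≤ k + 1) :
    IsGrundySeq k (closedNbhd ⊤) (⊤ : SimpleGraph V).neighborSet S := by
  classical
  refine ⟨hnd, fun i hi => ⟨S[0], by simp [closedNbhd_top], ?_⟩⟩
  rw [ncard_mem_and_mem_neighborSet_top]
  rcases Nat.eq_zero_or_pos i with rfl | hpos
  · simpa [Nat.one_le_iff_ne_zero, Nat.pos_iff_ne_zero] using hk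
  · have hfirst : S[0] ∈ (S.take i).toFinset := by
      rw [List.mem_toFinset, ← List.getElem_take (j := i) (h := by rw [List.length_take]; omega)]
      exact List.getElem_mem _
    rw [Finset.card_erase_of_mem hfirst,
      List.toFinset_card_of_nodup (hnd.sublist (List.take_sublist _ _)), List.length_take]
    omega

theorem kLGrundy_top [Fintype V] {k : ℕ} (hk : 1 ≤ k) (hkV : k + 1 ≤ Fintype.card V) :
    kLGrundy (⊤ : SimpleGraph V) k = k + 1 := by
  obtain ⟨s, -, hs⟩ := Finset.exists_subset_card_eq (s := Finset.univ) hkV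
  refine grundyVal_eq_of_forall_length_le (fun S hS => hS.length_le_of_top) ⟨s.toList, ?_, ?_⟩
  · exact isGrundySeq_top_of_length_le hk s.nodup_toList (by simp [hs])
  · simp [hs]

end CompleteGraph

/-- For `1 ≤ k ≤ n - 1`, `γ_gr^{L,k}(K_n) = k + 1`. -/
theorem kLGrundy_completeGraph (n k : ℕ) (hk : 1 ≤ k) (hkn : k ≤ n - 1) :
    kLGrundy (⊤ : SimpleGraph (Fin n)) k = k + 1 :=
  kLGrundy_top hk (by rw [Fintype.card_fin]; omega)
end

section
/- Let K_{m,n} be the complete bipartite graph with parts of sizes m and n, where m ≥ n ≥ k ≥ 1. Then the k-t-Grundy domination number satisfies γ_gr^{t,k}(K_{m,n}) = 2k. -/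
/-!
In `K_{m,n}` a vertex of one side can only footprint a vertex of the other side, and that vertex
is dominated by every vertex of the first side; so a sequence contains at most `k` vertices of
each side. Conversely, `k` vertices of one side followed by `k` of the other form a sequence:
the `i`-th vertex of the first block footprints any vertex of the second side, dominated by only
`i < k` predecessors, and the `j`-th vertex of the second block footprints any vertex of the first
side, dominated only by the `j < k` earlier vertices of the second block.
-/

theorem List.countP_le_of_countP_take_lt {α : Type*} {p : α → Bool} {k : ℕ} {S : List α}
    (h : ∀ i (hi : i < S.length), p S[i] → (S.take i).countP p < k) : S.countP p ≤ k := by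
  suffices ∀ j ≤ S.length, (S.take j).countP p ≤ k by simpa using this S.length le_rfl
  intro j
  induction j with
  | zero => simp
  | succ j ih =>
    intro hj
    rw [List.take_succ_eq_append_getElem (by omega), List.countP_append]
    by_cases hp : p S[j]
    · simpa [hp] using h j (by omega) hp
    · simpa [hp] using ih (by omega)

theorem List.Nodup.ncard_setOf_mem_and {α : Type*} {l : List α} (hl : l.Nodup) (p : α → Bool) :
    {w | w ∈ l ∧ p w}.ncard = l.countP p := by
  classical
  have h : {w | w ∈ l ∧ p w} = ((l.filter p).toFinset : Set α) := by
    ext x; simp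
  rw [h, Set.ncard_coe_finset, List.toFinset_card_of_nodup (hl.filter p),
    List.countP_eq_length_filter]

theorem List.ncard_le_length_of_subset {α : Type*} (l : List α) {s : Set α}
    (h : s ⊆ {w | w ∈ l}) : s.ncard ≤ l.length := by
  classical
  calc s.ncard ≤ {w | w ∈ l}.ncard := Set.ncard_le_ncard h l.finite_toSet
    _ = l.toFinset.card := by rw [← List.coe_toFinset, Set.ncard_coe_finset]
    _ ≤ l.length := l.toFinset_card_le

section GrundySeq

variable {V : Type*} {k : ℕ} {N₁ N₂ : V → Set V} {S : List V}

theorem IsGrundySeq.countP_le (hS : IsGrundySeq k N₁ N₂ S) (p : V → Bool)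
    (hp : ∀ v, p v → ∀ u ∈ N₁ v, ∀ w, p w → u ∈ N₂ w) : S.countP p ≤ k := by
  refine List.countP_le_of_countP_take_lt fun i hi hpi => ?_
  obtain ⟨u, hu, hcard⟩ := hS.2 i hi
  have hsub : {w | w ∈ S.take i ∧ p w} ⊆ {w | w ∈ S.take i ∧ u ∈ N₂ w} :=
    fun w ⟨hw, hpw⟩ => ⟨hw, hp _ hpi u hu w hpw⟩
  calc (S.take i).countP p = {w | w ∈ S.take i ∧ p w}.ncard :=
        ((hS.1.sublist (S.take_sublist i)).ncard_setOf_mem_and p).symm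
    _ ≤ {w | w ∈ S.take i ∧ u ∈ N₂ w}.ncard :=
        Set.ncard_le_ncard hsub ((S.take i).finite_toSet.subset fun _ hw => hw.1)
    _ < k := hcard

end GrundySeq

section CompleteBipartite

variable {α β : Type*} {k : ℕ}

theorem IsGrundySeq.length_le_of_completeBipartiteGraph {S : List (α ⊕ β)}
    (hS : IsGrundySeq k (completeBipartiteGraph α β).neighborSet
      (completeBipartiteGraph α β).neighborSet S) :
    S.length ≤ 2 * k := by
  have hleft := hS.countP_le Sum.isLeft (by
    rintro (a | b) hv u hu (c | d) hw <;> simp_all [completeBipartiteGraph_adj])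
  have hright := hS.countP_le Sum.isRight (by
    rintro (a | b) hv u hu (c | d) hw <;> simp_all [completeBipartiteGraph_adj])
  have hlen : S.length = S.countP Sum.isLeft + S.countP Sum.isRight := by
    rw [S.length_eq_countP_add_countP Sum.isLeft]
    congr 1
    exact List.countP_congr fun x _ => by cases x <;> simp
  omega

theorem isGrundySeq_completeBipartiteGraph_inl_append_inr {A : List α} {B : List β}
    (hA : A.Nodup) (hB : B.Nodup) (hAk : A.length = k) (hBk : B.length = k) :
    IsGrundySeq k (completeBipartiteGraph α β).neighborSet
      (completeBipartiteGraph α β).neighborSet (A.map Sum.inl ++ B.map Sum.inr) := by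
  refine ⟨List.nodup_append.2 ⟨hA.map Sum.inl_injective, hB.map Sum.inr_injective, by simp⟩,
    fun i hi => ?_⟩
  simp only [List.length_append, List.length_map] at hi
  rcases lt_or_ge i k with hik | hik
  · refine ⟨Sum.inr B[0], ?_, ?_⟩
    · simp [List.getElem_append_left, hAk, hik, completeBipartiteGraph_adj]
    · exact (List.ncard_le_length_of_subset _ fun _ hw => hw.1).trans_lt
        ((List.length_take_le _ _).trans_lt hik)
  · refine ⟨Sum.inl A[0], ?_, ?_⟩
    · simp [List.getElem_append_right, hAk, hik, completeBipartiteGraph_adj]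
    · refine (List.ncard_le_length_of_subset ((B.map Sum.inr).take (i - k)) ?_).trans_lt
        ((List.length_take_le _ _).trans_lt (by omega))
      rintro w ⟨hw, hadj⟩
      rw [List.take_append, List.mem_append, List.length_map, hAk] at hw
      rcases hw with hw | hw
      · obtain ⟨a, -, rfl⟩ := List.mem_map.1 (List.mem_of_mem_take hw)
        simp [completeBipartiteGraph_adj] at hadj
      · exact hw

end CompleteBipartite

theorem ktGrundy_completeBipartiteGraph_general (m n k : ℕ) (hkn : k ≤ n) (hnm : n ≤ m) :
    ktGrundy (completeBipartiteGraph (Fin m) (Fin n)) k = 2 * k := by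
  have hwitness := isGrundySeq_completeBipartiteGraph_inl_append_inr
    (List.nodup_ofFn.2 (Fin.castLE_injective (hkn.trans hnm)))
    (List.nodup_ofFn.2 (Fin.castLE_injective hkn)) List.length_ofFn List.length_ofFn
  refine IsGreatest.csSup_eq ⟨⟨_, hwitness, by simp [two_mul]⟩, ?_⟩
  rintro _ ⟨S, hS, rfl⟩
  exact hS.length_le_of_completeBipartiteGraph

/-- For `m ≥ n ≥ k ≥ 1`, `γ_gr^{t,k}(K_{m,n}) = 2k`. -/
theorem ktGrundy_completeBipartiteGraph (m n k : ℕ) (hk : 1 ≤ k) (hkn : k ≤ n) (hnm : n ≤ m) :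
    ktGrundy (completeBipartiteGraph (Fin m) (Fin n)) k = 2 * k :=
  ktGrundy_completeBipartiteGraph_general m n k hkn hnm
end

section
/- Let Q_d be the d-dimensional hypercube graph with d ≥ 2, and let k be an integer with 1 ≤ k ≤ d. Then γ_gr^{L,k}(Q_d) ≥ ⌈2^d − 2^{d−(k+1)}⌉; equivalently, γ_gr^{L,k}(Q_d) ≥ 2^d − 2^{d−k−1} when k < d, and γ_gr^{L,d}(Q_d) = 2^d. -/
/-- The `d`-dimensional hypercube: vertices are 0-1 sequences of length `d`, adjacent iff
they differ in exactly one position. -/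
def hypercubeGraph (d : ℕ) : SimpleGraph (Fin d → Bool) where
  Adj x y := (Finset.univ.filter fun i => x i ≠ y i).card = 1
  symm := by
    constructor
    intro x y h
    simpa [ne_comm] using h
  loopless := by
    constructor
    intro x h
    simp at h

/-!
Give every vertex a rank and a footprint in its closed neighbourhood; if the footprint of each
vertex is adjacent to fewer than `k` other chosen vertices of no larger rank, listing the chosen
vertices by rank is a `k`-`L`-sequence.

In `Q_d` take `p = k - 1`. A vertex with a `false` coordinate below `p`, the first one at `j`,
gets rank `j` and footprints its neighbour across `j`; that footprint is `true` up to `j`, so the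
vertices of no larger rank adjacent to it differ from it below `p`: there are at most `p`. The
vertices that are `true` below `p` form a subcube, split by the parity of their weight: the even
ones (rank `p`) footprint themselves, the odd ones (rank `p + 1`) their neighbour across `p`.
Adjacent subcube vertices have opposite parities, so the only collisions come from odd vertices
that are `false` at `p`; dropping these (at most `2 ^ (d - p - 2)`) vertices leaves a sequence
of the required length.

For `k = d` every vertex footprints a neighbour, which has only `d - 1` other neighbours.
-/

theorem List.Pairwise.rel_of_mem_take {α : Type*} {r : α → α → Prop} {l : List α}
    (hl : l.Pairwise r) {i : ℕ} (hi : i < l.length) {a : α} (ha : a ∈ l.take i) : r a l[i] := by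
  rw [← l.take_append_drop i, List.pairwise_append] at hl
  exact hl.2.2 a ha _ (List.mem_iff_getElem.mpr ⟨0, by simpa using hi, by simp⟩)

section Grundy

variable {V : Type*} {k : ℕ} {N₁ N₂ : V → Set V}

theorem IsGrundySeq.length_le_grundyVal [Fintype V] {S : List V}
    (hS : IsGrundySeq k N₁ N₂ S) : S.length ≤ grundyVal k N₁ N₂ :=
  le_csSup ⟨Fintype.card V, by rintro _ ⟨T, hT, rfl⟩; exact hT.1.length_le_card⟩ ⟨S, hS, rfl⟩

theorem grundyVal_le_card [Fintype V] : grundyVal k N₁ N₂ ≤ Fintype.card V :=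
  csSup_le ⟨0, [], ⟨List.nodup_nil, fun _ hi => absurd hi (Nat.not_lt_zero _)⟩, rfl⟩
    (by rintro _ ⟨S, hS, rfl⟩; exact hS.1.length_le_card)

theorem card_le_grundyVal_of_rank [Fintype V] (A : Finset V) (ρ : V → ℕ) (f : V → V)
    (hf : ∀ v ∈ A, f v ∈ N₁ v)
    (hcount : ∀ v ∈ A, {w | w ∈ A ∧ w ≠ v ∧ ρ w ≤ ρ v ∧ f v ∈ N₂ w}.ncard < k) :
    A.card ≤ grundyVal k N₁ N₂ := by
  set S := A.toList.mergeSort fun a b => decide (ρ a ≤ ρ b)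
  have hperm : S.Perm A.toList := List.mergeSort_perm _ _
  have hmem : ∀ {w}, w ∈ S ↔ w ∈ A := by simp [hperm.mem_iff]
  have hsorted : S.Pairwise fun a b => a ≠ b ∧ ρ a ≤ ρ b := by
    refine (hperm.nodup_iff.mpr A.nodup_toList).and ?_
    simpa using List.pairwise_mergeSort (le := fun a b => decide (ρ a ≤ ρ b))
      (fun _ _ _ h₁ h₂ => by simp only [decide_eq_true_eq] at *; exact h₁.trans h₂)
      (fun a b => by simpa using le_total (ρ a) (ρ b)) A.toList
  have hS : IsGrundySeq k N₁ N₂ S := by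
    refine ⟨hsorted.imp And.left, fun i hi => ?_⟩
    have hiA : S[i] ∈ A := hmem.mp (List.getElem_mem hi)
    refine ⟨f S[i], hf _ hiA, lt_of_le_of_lt ?_ (hcount _ hiA)⟩
    refine Set.ncard_le_ncard ?_ (A.finite_toSet.subset fun w hw => hw.1)
    rintro w ⟨hw, hN⟩
    exact ⟨hmem.mp (List.mem_of_mem_take hw), (hsorted.rel_of_mem_take hi hw).1,
      (hsorted.rel_of_mem_take hi hw).2, hN⟩
  simpa [hperm.length_eq] using hS.length_le_grundyVal

end Grundy

theorem kLGrundy_eq_card_of_forall_exists_adj {V : Type*} [Fintype V] (G : SimpleGraph V)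
    (k : ℕ) (h : ∀ v, ∃ u, G.Adj v u ∧ (G.neighborSet u).ncard ≤ k) :
    kLGrundy G k = Fintype.card V := by
  choose f hadj hdeg using h
  refine grundyVal_le_card.antisymm ?_
  simpa using card_le_grundyVal_of_rank (N₁ := closedNbhd G) (N₂ := G.neighborSet) (k := k)
    Finset.univ (fun _ => 0) f (fun v _ => Set.mem_insert_of_mem _ (hadj v)) fun v _ => by
      have hv : v ∈ G.neighborSet (f v) := (hadj v).symm
      have hpos : 0 < (G.neighborSet (f v)).ncard :=
        (Set.ncard_pos (Set.toFinite _)).mpr ⟨v, hv⟩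
      calc _ ≤ (G.neighborSet (f v) \ {v}).ncard :=
            Set.ncard_le_ncard (by rintro w ⟨-, hwv, -, hw⟩; exact ⟨G.adj_symm hw, hwv⟩)
        _ < k := by rw [Set.ncard_sdiff_singleton_of_mem hv]; have := hdeg v; omega

namespace hypercubeGraph

open Finset

variable {d : ℕ}

def flipCoord (c : Fin d) (v : Fin d → Bool) : Fin d → Bool :=
  Function.update v c (!v c)

@[simp]
theorem flipCoord_apply_self (c : Fin d) (v : Fin d → Bool) : flipCoord c v c = !v c :=
  Function.update_self ..

theorem flipCoord_apply_of_ne {c i : Fin d} (v : Fin d → Bool) (h : i ≠ c) :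
    flipCoord c v i = v i :=
  Function.update_of_ne h ..

theorem eq_flipCoord_iff {c : Fin d} {v w : Fin d → Bool} :
    w = flipCoord c v ↔ ∀ i, w i ≠ v i ↔ i = c := by
  constructor
  · rintro rfl i
    by_cases hi : i = c
    · subst hi; simp
    · simp [flipCoord_apply_of_ne v hi, hi]
  · intro h
    funext i
    by_cases hi : i = c
    · subst hi
      exact (flipCoord_apply_self i v).symm ▸ Bool.eq_not_iff.mpr ((h i).mpr rfl)
    · rw [flipCoord_apply_of_ne v hi]; simpa [hi] using h i

@[simp]
theorem flipCoord_flipCoord (c : Fin d) (v : Fin d → Bool) : flipCoord c (flipCoord c v) = v :=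
  (eq_flipCoord_iff.mpr fun i => by rw [ne_comm, ← eq_flipCoord_iff.mp rfl i]).symm

theorem flipCoord_left_injective (v : Fin d → Bool) : Function.Injective (flipCoord · v) :=
  fun c c' h => (eq_flipCoord_iff.mp h c).mp (by simp)

theorem adj_iff {v w : Fin d → Bool} :
    (hypercubeGraph d).Adj v w ↔ ∃ c, w = flipCoord c v := by
  change #{i | v i ≠ w i} = 1 ↔ _
  simp only [card_eq_one, eq_flipCoord_iff, Finset.ext_iff, mem_filter, mem_univ, true_and,
    mem_singleton, ne_comm]

theorem neighborSet_eq (v : Fin d → Bool) :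
    (hypercubeGraph d).neighborSet v = Set.range (flipCoord · v) := by
  ext w
  simp [adj_iff, eq_comm]

theorem ncard_neighborSet (v : Fin d → Bool) :
    ((hypercubeGraph d).neighborSet v).ncard = d := by
  rw [neighborSet_eq, Set.ncard_range_of_injective (flipCoord_left_injective v),
    Nat.card_eq_fintype_card, Fintype.card_fin]

def weight (v : Fin d → Bool) : ℕ := ∑ i, (v i).toNat

theorem even_weight_flipCoord (c : Fin d) (v : Fin d → Bool) :
    Even (weight (flipCoord c v)) ↔ ¬Even (weight v) := by
  have key : ∀ w : Fin d → Bool, weight w = (w c).toNat + ∑ i ∈ univ.erase c, (w i).toNat :=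
    fun w => (add_sum_erase _ _ (mem_univ c)).symm
  have hrest : ∑ i ∈ univ.erase c, (flipCoord c v i).toNat = ∑ i ∈ univ.erase c, (v i).toNat :=
    sum_congr rfl fun i hi => by rw [flipCoord_apply_of_ne v (ne_of_mem_erase hi)]
  rw [key, key v, hrest, flipCoord_apply_self]
  cases v c <;> simp [Nat.even_add_one, parity_simps]

theorem eq_of_forall_ne_of_even_weight_iff {c : Fin d} {v w : Fin d → Bool}
    (h : ∀ i ≠ c, v i = w i) (hweight : Even (weight v) ↔ Even (weight w)) : v = w := by
  by_contra hvw
  have hc : w c ≠ v c := fun hc => hvw (funext fun i => by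
    by_cases hi : i = c
    · exact hi ▸ hc.symm
    · exact h i hi)
  have hflip : w = flipCoord c v :=
    eq_flipCoord_iff.mpr fun i => ⟨fun hi => by_contra fun hic => hi (h i hic).symm, (· ▸ hc)⟩
  rw [hflip, even_weight_flipCoord] at hweight
  tauto

variable (p : Fin d)

def lead (v : Fin d → Bool) : Fin d :=
  ({c | p ≤ c ∨ v c = false} : Finset (Fin d)).min' ⟨p, by simp⟩

variable {p}

theorem lead_le (v : Fin d → Bool) : lead p v ≤ p :=
  min'_le _ _ (by simp)

theorem apply_of_lt_lead {v : Fin d → Bool} {c : Fin d} (hc : c < lead p v) : v c = true := by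
  by_contra h
  exact (min'_le _ c (by simpa using Or.inr h)).not_gt hc

theorem apply_lead_of_lt {v : Fin d → Bool} (h : lead p v < p) : v (lead p v) = false := by
  have := min'_mem ({c | p ≤ c ∨ v c = false} : Finset (Fin d)) ⟨p, by simp⟩
  exact (mem_filter.mp this).2.resolve_left h.not_ge

theorem lead_eq_iff {v : Fin d → Bool} : lead p v = p ↔ ∀ c < p, v c = true :=
  ⟨fun h _ hc => apply_of_lt_lead (h ▸ hc), fun h => (lead_le v).eq_or_lt.resolve_right
    fun hlt => by simpa [h _ hlt] using apply_lead_of_lt hlt⟩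

variable (p)

def footprint (v : Fin d → Bool) : Fin d → Bool :=
  if lead p v = p ∧ Even (weight v) then v else flipCoord (lead p v) v

def rank (v : Fin d → Bool) : ℕ :=
  if lead p v = p ∧ ¬Even (weight v) then p + 1 else lead p v

def exceptional : Finset (Fin d → Bool) :=
  {v | lead p v = p ∧ v p = false ∧ ¬Even (weight v)}

theorem footprint_mem_closedNbhd (v : Fin d → Bool) :
    footprint p v ∈ closedNbhd (hypercubeGraph d) v := by
  unfold footprint
  split_ifs
  · exact Set.mem_insert v _
  · exact Set.mem_insert_of_mem v (adj_iff.mpr ⟨_, rfl⟩)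

variable {p}

theorem footprint_apply_of_le_lead {v : Fin d → Bool} {c : Fin d} (hcp : c < p)
    (hc : c ≤ lead p v) : footprint p v c = true := by
  unfold footprint
  split_ifs with h
  · exact apply_of_lt_lead (h.1 ▸ hcp)
  · rcases hc.lt_or_eq with hlt | rfl
    · rw [flipCoord_apply_of_ne v hlt.ne]
      exact apply_of_lt_lead hlt
    · simpa using apply_lead_of_lt hcp

theorem lt_of_eq_flipCoord_footprint {v w : Fin d → Bool} (hv : v ∉ exceptional p)
    (hw : w ∉ exceptional p) (hwv : w ≠ v) (hrank : rank p w ≤ rank p v) {c : Fin d}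
    (hc : w = flipCoord c (footprint p v)) : c < p := by
  by_contra! hpc
  have hagree : ∀ i < p, w i = footprint p v i := fun i hi =>
    hc ▸ flipCoord_apply_of_ne _ (hi.trans_le hpc).ne
  simp only [exceptional, mem_filter, mem_univ, true_and, not_and] at hv hw
  rcases (lead_le (p := p) v).lt_or_eq with hlt | heq
  · have hwlead : lead p w ≤ lead p v := by
      simp only [rank, hlt.ne, false_and, if_false] at hrank
      split_ifs at hrank
      · exact absurd (Fin.lt_def.mp hlt) (by omega)
      · exact Fin.le_def.mpr hrank
    have hwlt : lead p w < p := hwlead.trans_lt hlt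
    simpa [hagree _ hwlt, footprint_apply_of_le_lead hwlt hwlead] using apply_lead_of_lt hwlt
  · have hwlead : lead p w = p := lead_eq_iff.mpr fun i hi =>
      (hagree i hi).trans (footprint_apply_of_le_lead hi (hi.le.trans_eq heq.symm))
    have hweight : Even (weight w) ↔ ¬Even (weight (footprint p v)) :=
      hc ▸ even_weight_flipCoord c _
    by_cases hev : Even (weight v)
    · have hu : footprint p v = v := by simp [footprint, heq, hev]
      rw [hu] at hweight
      simp [rank, heq, hwlead, hev, hweight] at hrank
    · have hvp : v p = true := by simpa using mt (hv heq) (by simpa using hev)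
      have hu : footprint p v = flipCoord p v := by simp [footprint, heq, hev]
      rw [hu, even_weight_flipCoord] at hweight
      have hwp : w p = true := by simpa using mt (hw hwlead) (by simpa [hweight] using hev)
      have hcp : p = c := (eq_flipCoord_iff.mp (hu ▸ hc) p).mp (by simp [hvp, hwp])
      exact hwv (by rw [hc, hu, ← hcp, flipCoord_flipCoord])

variable (p)

theorem card_compl_exceptional_le_kLGrundy :
    (exceptional p)ᶜ.card ≤ kLGrundy (hypercubeGraph d) (p + 1) := by
  refine card_le_grundyVal_of_rank _ (rank p) (footprint p)
    (fun v _ => footprint_mem_closedNbhd p v) fun v hv => ?_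
  calc _ ≤ ((Iio p).image (flipCoord · (footprint p v))).card := by
        rw [← Set.ncard_coe_finset]
        refine Set.ncard_le_ncard ?_
        rintro w ⟨hw, hwv, hrank, hadj⟩
        obtain ⟨c, hc⟩ := adj_iff.mp (hypercubeGraph d |>.adj_symm hadj)
        exact mem_image.mpr ⟨c, mem_Iio.mpr (lt_of_eq_flipCoord_footprint (mem_compl.mp hv)
          (mem_compl.mp hw) hwv hrank hc), hc.symm⟩
    _ ≤ (Iio p).card := card_image_le
    _ < p + 1 := by rw [Fin.card_Iio]; omega

theorem card_exceptional_le (hp : p + 1 < d) :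
    (exceptional p).card ≤ 2 ^ (d - p - 2) := by
  let restrict (v : Fin d → Bool) (i : Fin (d - p - 2)) : Bool := v ⟨p + 1 + i, by omega⟩
  calc (exceptional p).card ≤ (univ : Finset (Fin (d - p - 2) → Bool)).card := by
        refine card_le_card_of_injOn restrict (fun _ _ => mem_univ _) fun v hv w hw hvw => ?_
        simp only [exceptional, coe_filter, mem_univ, true_and, Set.mem_ofPred_eq] at hv hw
        refine eq_of_forall_ne_of_even_weight_iff (c := ⟨d - 1, by omega⟩) (fun i hi => ?_)
          (by tauto)
        rcases lt_trichotomy i p with hip | rfl | hpi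
        · rw [lead_eq_iff.mp hv.1 i hip, lead_eq_iff.mp hw.1 i hip]
        · rw [hv.2.1, hw.2.1]
        · have hi' : (i : ℕ) < d - 1 := by
            have : (i : ℕ) ≠ d - 1 := fun h => hi (Fin.ext h)
            omega
          have := congrFun hvw ⟨i - (p + 1), by rw [Fin.lt_def] at hpi; omega⟩
          have hidx : (p : ℕ) + 1 + (i - (p + 1)) = i := by rw [Fin.lt_def] at hpi; omega
          simpa [restrict, hidx] using this
    _ = 2 ^ (d - p - 2) := by simp

end hypercubeGraph

open hypercubeGraph in
theorem kLGrundy_hypercube_lower_bound_general (d k : ℕ) (hk : 1 ≤ k) (hkd : k ≤ d) :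
    (k < d → 2 ^ d - 2 ^ (d - k - 1) ≤ kLGrundy (hypercubeGraph d) k) ∧
      kLGrundy (hypercubeGraph d) d = 2 ^ d := by
  refine ⟨fun hkd' => ?_, ?_⟩
  · obtain ⟨K, rfl⟩ : ∃ K, k = K + 1 := ⟨k - 1, by omega⟩
    have hE := card_exceptional_le (⟨K, by omega⟩ : Fin d) (by simpa using hkd')
    have hA := card_compl_exceptional_le_kLGrundy (⟨K, by omega⟩ : Fin d)
    rw [Finset.card_compl, Fintype.card_fun, Fintype.card_bool, Fintype.card_fin] at hA
    simp only at hE hA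
    rw [show d - (K + 1) - 1 = d - K - 2 by omega]
    omega
  · have h0 : 0 < d := by omega
    rw [kLGrundy_eq_card_of_forall_exists_adj _ d fun v =>
      ⟨flipCoord ⟨0, h0⟩ v, adj_iff.mpr ⟨_, rfl⟩, (ncard_neighborSet _).le⟩]
    simp

/-- For `d ≥ 2` and `1 ≤ k ≤ d`, `γ_gr^{L,k}(Q_d) ≥ ⌈2^d - 2^{d-(k+1)}⌉`: when `k < d` this
says `γ_gr^{L,k}(Q_d) ≥ 2^d - 2^{d-k-1}`, and when `k = d` it says `γ_gr^{L,d}(Q_d) = 2^d`. -/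
theorem kLGrundy_hypercube_lower_bound (d k : ℕ) (hd : 2 ≤ d) (hk : 1 ≤ k) (hkd : k ≤ d) :
    (k < d → 2 ^ d - 2 ^ (d - k - 1) ≤ kLGrundy (hypercubeGraph d) k) ∧
      kLGrundy (hypercubeGraph d) d = 2 ^ d :=
  kLGrundy_hypercube_lower_bound_general d k hk hkd
end
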